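/- arXiv:2309.00953 — 2 statements merged into one kernel-verified Lean document; each statement's English description precedes it below -/
import Mathlib

section
/- Fractional integration by parts: for smooth functions ρ, φ : [0,T] → ℝ, ∫₀^T φ(t) ∂ₜ^α ρ(t) dt = ∫₀^T ρ(t) ∂̂ₜ^α φ(t) dt − ρ(0) · ₀Î_T^{1−α} φ, where ∂ₜ^α is the forward Caputo derivative, ∂̂ₜ^α φ(t) := −∂ₜ[(1/Γ(1−α)) ∫ₜ^T (s−t)^{−α} φ(s) ds] is the backward Riemann–Liouville derivative, and ₀Î_T^{1−α} φ := (1/Γ(1−α)) ∫₀^T s^{−α} φ(s) ds. -/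
open MeasureTheory intervalIntegral Real

/-- Forward Caputo fractional derivative of order `α`. -/
noncomputable def caputoDeriv (α : ℝ) (g : ℝ → ℝ) (t : ℝ) : ℝ :=
  (1 / Real.Gamma (1 - α)) * ∫ s in (0:ℝ)..t, (t - s) ^ (-α) * deriv g s

/-- Backward Riemann–Liouville fractional integral `ₜÎ_T^{1−α} φ`. -/
noncomputable def backRLIntegral (α T : ℝ) (φ : ℝ → ℝ) (t : ℝ) : ℝ :=
  (1 / Real.Gamma (1 - α)) * ∫ s in t..T, (s - t) ^ (-α) * φ s

/-- Backward Riemann–Liouville fractional derivative `∂̂ₜ^α φ`. -/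
noncomputable def backRLDeriv (α T : ℝ) (φ : ℝ → ℝ) (t : ℝ) : ℝ :=
  -deriv (backRLIntegral α T φ) t

open Set
open scoped Interval

/-!
Fubini on the triangle `0 ≤ s < t ≤ T` (the integrand is a convolution integrand, hence
integrable) turns the left-hand side into `∫₀ᵀ ρ' I` with `I := ₜÎ_T^{1−α} φ`, and integration by
parts together with `I T = 0` gives the right-hand side. The analytic work is to show that `I` is
continuous on `[0, T]` and differentiable inside with an integrable derivative. Substituting
`s = t + (T - t) v` gives `I t = (T - t)^(1-α) ∫₀¹ v^(-α) φ(t + (T - t) v) dv / Γ(1 - α)`, where the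
singularity no longer moves with `t`, so the integral is differentiated under the integral sign,
and `I' = O((T - t)^(-α))`.
-/

lemma ContDiffOn.hasDerivAt_derivWithin_Icc {f : ℝ → ℝ} {a b x : ℝ}
    (hf : ContDiffOn ℝ 1 f (Icc a b)) (hx : x ∈ Ioo a b) :
    HasDerivAt f (derivWithin f (Icc a b) x) x :=
  (hf.differentiableOn one_ne_zero x (Ioo_subset_Icc_self hx)).hasDerivWithinAt.hasDerivAt
    (Icc_mem_nhds hx.1 hx.2)

lemma ContDiffOn.intervalIntegrable_deriv {f : ℝ → ℝ} {a b : ℝ} (hab : a < b)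
    (hf : ContDiffOn ℝ 1 f (Icc a b)) : IntervalIntegrable (deriv f) volume a b := by
  have hcont := hf.continuousOn_derivWithin (uniqueDiffOn_Icc hab) le_rfl
  refine (hcont.intervalIntegrable_of_Icc hab.le).congr_uIoo fun x hx => ?_
  rw [uIoo_of_le hab.le] at hx
  exact (hf.hasDerivAt_derivWithin_Icc hx).deriv.symm

theorem integral_mul_integral_sub_comm {G : Type*} [AddGroup G] [MeasurableSpace G]
    [MeasurableAdd₂ G] [MeasurableNeg G] {μ : Measure G} [SFinite μ] [μ.IsAddRightInvariant]
    {f g k : G → ℝ} {C : ℝ} (hf : Integrable f μ) (hk : Integrable k μ)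
    (hg : AEStronglyMeasurable g μ) (hgC : ∀ t, ‖g t‖ ≤ C) :
    ∫ t, g t * ∫ s, k (t - s) * f s ∂μ ∂μ = ∫ s, f s * ∫ t, k (t - s) * g t ∂μ ∂μ := by
  have hint : Integrable (fun p : G × G => g p.1 * (k (p.1 - p.2) * f p.2)) (μ.prod μ) := by
    have := hf.convolution_integrand (ContinuousLinearMap.mul ℝ ℝ) hk
    refine (this.bdd_mul (f := fun p : G × G => g p.1) hg.comp_fst
      (Filter.Eventually.of_forall fun p => hgC p.1)).congr ?_
    filter_upwards with p
    simp only [ContinuousLinearMap.mul_apply']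
    ring
  simp_rw [← MeasureTheory.integral_const_mul]
  rw [integral_integral_swap hint]
  congr 1 with s
  congr 1 with t
  ring

section TriangleFubini

variable {k f g : ℝ → ℝ} {T : ℝ}

lemma integral_indicator_sub_mul_indicator_left {t : ℝ} (ht : t ∈ Icc 0 T) :
    ∫ s, (Ioc 0 T).indicator k (t - s) * (Ioc 0 T).indicator f s
      = ∫ s in 0..t, k (t - s) * f s := by
  have hsupp : (fun s => (Ioc 0 T).indicator k (t - s) * (Ioc 0 T).indicator f s)
      = (Ioo 0 t).indicator (fun s => k (t - s) * f s) := by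
    ext s
    simp only [indicator_apply, mem_Ioc, mem_Ioo, sub_pos]
    split_ifs <;> grind
  rw [hsupp, MeasureTheory.integral_indicator measurableSet_Ioo,
    ← integral_Ioc_eq_integral_Ioo, integral_of_le ht.1]

lemma integral_indicator_sub_mul_indicator_right {s : ℝ} (hs : s ∈ Icc 0 T) :
    ∫ t, (Ioc 0 T).indicator k (t - s) * (Ioc 0 T).indicator g t
      = ∫ t in s..T, k (t - s) * g t := by
  have hsupp : (fun t => (Ioc 0 T).indicator k (t - s) * (Ioc 0 T).indicator g t)
      = (Ioc s T).indicator (fun t => k (t - s) * g t) := by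
    ext t
    simp only [indicator_apply, mem_Ioc, sub_pos]
    split_ifs <;> grind
  rw [hsupp, MeasureTheory.integral_indicator measurableSet_Ioc, integral_of_le hs.2]

lemma integral_indicator_Ioc_mul {h X : ℝ → ℝ} (hT : 0 ≤ T) :
    ∫ t, (Ioc 0 T).indicator h t * X t = ∫ t in 0..T, h t * X t := by
  simp_rw [← indicator_mul_left]
  rw [MeasureTheory.integral_indicator measurableSet_Ioc, integral_of_le hT]

theorem integral_mul_integral_kernel_comm (hT : 0 ≤ T) (hk : IntervalIntegrable k volume 0 T)
    (hf : IntervalIntegrable f volume 0 T) (hg : ContinuousOn g (Icc 0 T)) :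
    ∫ t in 0..T, g t * ∫ s in 0..t, k (t - s) * f s
      = ∫ s in 0..T, f s * ∫ t in s..T, k (t - s) * g t := by
  obtain ⟨C, hC⟩ := isCompact_Icc.exists_bound_of_continuousOn hg
  have hC0 : 0 ≤ C := (norm_nonneg _).trans (hC 0 ⟨le_rfl, hT⟩)
  have hgC : ∀ t, ‖(Ioc 0 T).indicator g t‖ ≤ C := fun t => by
    by_cases ht : t ∈ Ioc 0 T
    · simpa [ht] using hC t (Ioc_subset_Icc_self ht)
    · simpa [ht] using hC0
  have key := integral_mul_integral_sub_comm (μ := volume)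
    ((integrable_indicator_iff measurableSet_Ioc).2 hf.1)
    ((integrable_indicator_iff measurableSet_Ioc).2 hk.1)
    ((integrable_indicator_iff measurableSet_Ioc).2
      ((hg.integrableOn_compact isCompact_Icc).mono_set Ioc_subset_Icc_self)).aestronglyMeasurable
    hgC
  rw [integral_indicator_Ioc_mul hT, integral_indicator_Ioc_mul hT] at key
  calc _ = ∫ t in 0..T, g t * ∫ s, (Ioc 0 T).indicator k (t - s) * (Ioc 0 T).indicator f s :=
        integral_congr fun t ht => by
          rw [integral_indicator_sub_mul_indicator_left (uIcc_of_le hT ▸ ht)]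
    _ = _ := key
    _ = _ := integral_congr fun s hs => by
          rw [integral_indicator_sub_mul_indicator_right (uIcc_of_le hT ▸ hs)]

end TriangleFubini

noncomputable def weightedSegmentIntegral (w ψ : ℝ → ℝ) (T t : ℝ) : ℝ :=
  ∫ v in (0:ℝ)..1, w v * ψ (t + (T - t) * v)

section WeightedSegmentIntegral

variable {w ψ : ℝ → ℝ} {a T t v : ℝ}

lemma segment_mem_Icc (ht : t ∈ Icc a T) (hv : v ∈ Icc (0:ℝ) 1) :
    t + (T - t) * v ∈ Icc a T :=
  ⟨by nlinarith [ht.1, ht.2, hv.1], by nlinarith [ht.2, hv.2]⟩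

lemma segment_mem_Ioo (ht : t ∈ Ioo a T) (hv : v ∈ Ioo (0:ℝ) 1) :
    t + (T - t) * v ∈ Ioo a T :=
  ⟨by nlinarith [ht.1, ht.2, hv.1], by nlinarith [ht.2, hv.2]⟩

lemma continuousOn_comp_segment (hψ : ContinuousOn ψ (Icc a T)) (ht : t ∈ Icc a T) :
    ContinuousOn (fun v => ψ (t + (T - t) * v)) (Icc 0 1) :=
  hψ.comp (by fun_prop) fun _ hv => segment_mem_Icc ht hv

lemma aestronglyMeasurable_weight_mul_comp_segment (hw : IntervalIntegrable w volume 0 1)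
    (hψ : ContinuousOn ψ (Icc a T)) (ht : t ∈ Icc a T) :
    AEStronglyMeasurable (fun v => w v * ψ (t + (T - t) * v)) (volume.restrict (Ι 0 1)) := by
  refine hw.def'.aestronglyMeasurable.mul ?_
  rw [uIoc_of_le zero_le_one]
  exact ((continuousOn_comp_segment hψ ht).mono Ioc_subset_Icc_self).aestronglyMeasurable
    measurableSet_Ioc

lemma continuousOn_weightedSegmentIntegral (hw : IntervalIntegrable w volume 0 1)
    (hψ : ContinuousOn ψ (Icc a T)) :
    ContinuousOn (weightedSegmentIntegral w ψ T) (Icc a T) := by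
  obtain ⟨M, hM⟩ := isCompact_Icc.exists_bound_of_continuousOn hψ
  intro t₀ ht₀
  refine continuousWithinAt_of_dominated_interval (bound := fun v => ‖w v‖ * M) ?_ ?_
    (hw.norm.mul_const M) ?_
  · filter_upwards [self_mem_nhdsWithin] with t ht
    exact aestronglyMeasurable_weight_mul_comp_segment hw hψ ht
  · filter_upwards [self_mem_nhdsWithin] with t ht
    refine Filter.Eventually.of_forall fun v hv => ?_
    rw [uIoc_of_le zero_le_one] at hv
    rw [norm_mul]
    exact mul_le_mul_of_nonneg_left (hM _ (segment_mem_Icc ht (Ioc_subset_Icc_self hv)))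
      (norm_nonneg _)
  · refine Filter.Eventually.of_forall fun v hv => ?_
    rw [uIoc_of_le zero_le_one] at hv
    refine ContinuousWithinAt.mul continuousWithinAt_const ?_
    exact (hψ.comp (by fun_prop) fun t ht => segment_mem_Icc ht (Ioc_subset_Icc_self hv)) t₀ ht₀

lemma hasDerivAt_weightedSegmentIntegral (hw : IntervalIntegrable w volume 0 1)
    (hψ : ContDiffOn ℝ 1 ψ (Icc a T)) (ht : t ∈ Ioo a T) :
    HasDerivAt (weightedSegmentIntegral w ψ T)
      (weightedSegmentIntegral (fun v => w v * (1 - v)) (derivWithin ψ (Icc a T)) T t) t := by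
  have hψ' : ContinuousOn (derivWithin ψ (Icc a T)) (Icc a T) :=
    hψ.continuousOn_derivWithin (uniqueDiffOn_Icc (ht.1.trans ht.2)) le_rfl
  obtain ⟨M, hM⟩ := isCompact_Icc.exists_bound_of_continuousOn hψ'
  have hw' : IntervalIntegrable (fun v => w v * (1 - v)) volume 0 1 :=
    hw.mul_continuousOn (by fun_prop)
  refine (intervalIntegral.hasDerivAt_integral_of_dominated_loc_of_deriv_le
    (F := fun x v => w v * ψ (x + (T - x) * v))
    (F' := fun x v => w v * (1 - v) * derivWithin ψ (Icc a T) (x + (T - x) * v))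
    (isOpen_Ioo.mem_nhds ht) ?_ ?_ ?_ ?_ (hw.norm.mul_const M) ?_).2
  · filter_upwards [isOpen_Ioo.mem_nhds ht] with x hx
    exact aestronglyMeasurable_weight_mul_comp_segment hw hψ.continuousOn (Ioo_subset_Icc_self hx)
  · exact hw.mul_continuousOn (uIcc_of_le (zero_le_one' ℝ) ▸
      continuousOn_comp_segment hψ.continuousOn (Ioo_subset_Icc_self ht))
  · exact aestronglyMeasurable_weight_mul_comp_segment hw' hψ' (Ioo_subset_Icc_self ht)
  · refine Filter.Eventually.of_forall fun v hv x hx => ?_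
    rw [uIoc_of_le zero_le_one] at hv
    have h1v : ‖1 - v‖ ≤ 1 := by
      rw [Real.norm_of_nonneg (by linarith [hv.2])]; linarith [hv.1]
    have hMy := hM _ (segment_mem_Icc (Ioo_subset_Icc_self hx) (Ioc_subset_Icc_self hv))
    rw [norm_mul, norm_mul, mul_assoc]
    refine mul_le_mul_of_nonneg_left ?_ (norm_nonneg _)
    exact (mul_le_mul h1v hMy (norm_nonneg _) zero_le_one).trans_eq (one_mul M)
  · filter_upwards [Measure.ae_ne volume 1] with v hv1 hv x hx
    rw [uIoc_of_le zero_le_one] at hv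
    have hy := segment_mem_Ioo hx ⟨hv.1, lt_of_le_of_ne hv.2 hv1⟩
    have hψy := hψ.hasDerivAt_derivWithin_Icc hy
    have hseg : HasDerivAt (fun x => x + (T - x) * v) (1 - v) x :=
      ((hasDerivAt_id' x).add (((hasDerivAt_id' x).const_sub T).mul_const v)).congr_deriv
        (by ring)
    exact ((hψy.comp x hseg).const_mul (w v)).congr_deriv (by ring)

end WeightedSegmentIntegral

section BackwardRiemannLiouville

variable {α a T t : ℝ} {φ : ℝ → ℝ}

lemma intervalIntegrable_rpow_neg (hα : α < 1) (a b : ℝ) :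
    IntervalIntegrable (fun v : ℝ => v ^ (-α)) volume a b :=
  intervalIntegrable_rpow' (by linarith)

lemma backRLIntegral_eq_rpow_mul (hα : α < 1) (htT : t ≤ T) :
    backRLIntegral α T φ t
      = 1 / Gamma (1 - α) * ((T - t) ^ (1 - α) * weightedSegmentIntegral (· ^ (-α)) φ T t) := by
  have hsub := smul_integral_comp_add_mul (a := 0) (b := 1)
    (fun s => ((s - t) ^ (-α) * φ s : ℝ)) (T - t) t
  simp only [mul_zero, add_zero, mul_one, add_sub_cancel, smul_eq_mul] at hsub
  rw [backRLIntegral, weightedSegmentIntegral, ← hsub]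
  congr 1
  rw [← intervalIntegral.integral_const_mul, ← intervalIntegral.integral_const_mul]
  refine integral_congr fun v hv => ?_
  rw [uIcc_of_le zero_le_one] at hv
  have hTt : 0 ≤ T - t := sub_nonneg.2 htT
  simp only [add_sub_cancel_left, mul_rpow hTt hv.1]
  rw [show 1 - α = 1 + -α by ring, rpow_add' hTt (by linarith), rpow_one]
  ring

lemma continuousOn_backRLIntegral (hα : α < 1) (hφ : ContinuousOn φ (Icc a T)) :
    ContinuousOn (backRLIntegral α T φ) (Icc a T) := by
  have hpow : ContinuousOn (fun t => (T - t) ^ (1 - α)) (Icc a T) :=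
    (continuousOn_const.sub continuousOn_id).rpow_const fun _ _ => Or.inr (by linarith)
  have hJ := continuousOn_weightedSegmentIntegral (intervalIntegrable_rpow_neg hα 0 1) hφ
  have hrep : ContinuousOn (fun t => 1 / Gamma (1 - α) *
      ((T - t) ^ (1 - α) * weightedSegmentIntegral (· ^ (-α)) φ T t)) (Icc a T) := by
    fun_prop
  exact hrep.congr fun t ht => backRLIntegral_eq_rpow_mul hα ht.2

lemma hasDerivAt_backRLIntegral (hα : α < 1) (hφ : ContDiffOn ℝ 1 φ (Icc a T))
    (ht : t ∈ Ioo a T) :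
    HasDerivAt (backRLIntegral α T φ)
      (1 / Gamma (1 - α) * ((T - t) ^ (1 - α) * weightedSegmentIntegral
          (fun v => v ^ (-α) * (1 - v)) (derivWithin φ (Icc a T)) T t
        - (1 - α) * (T - t) ^ (-α) * weightedSegmentIntegral (· ^ (-α)) φ T t)) t := by
  have hpow : HasDerivAt (fun x => (T - x) ^ (1 - α)) (-1 * (1 - α) * (T - t) ^ (1 - α - 1)) t :=
    ((hasDerivAt_id' t).const_sub T).rpow_const (Or.inl (by linarith [ht.2]))
  have hJ := hasDerivAt_weightedSegmentIntegral (intervalIntegrable_rpow_neg hα 0 1) hφ ht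
  refine ((hpow.mul hJ).const_mul (1 / Gamma (1 - α))).congr_of_eventuallyEq ?_ |>.congr_deriv ?_
  · filter_upwards [Iio_mem_nhds ht.2] with x hx
    exact backRLIntegral_eq_rpow_mul hα (le_of_lt hx)
  · rw [show 1 - α - 1 = -α by ring]
    ring

lemma intervalIntegrable_deriv_backRLIntegral (hα : α < 1) (haT : a < T)
    (hφ : ContDiffOn ℝ 1 φ (Icc a T)) :
    IntervalIntegrable (deriv (backRLIntegral α T φ)) volume a T := by
  have hφ' : ContinuousOn (derivWithin φ (Icc a T)) (Icc a T) :=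
    hφ.continuousOn_derivWithin (uniqueDiffOn_Icc haT) le_rfl
  have hJ := continuousOn_weightedSegmentIntegral (intervalIntegrable_rpow_neg hα 0 1)
    hφ.continuousOn
  have hJ' : ContinuousOn (weightedSegmentIntegral (fun v => v ^ (-α) * (1 - v))
      (derivWithin φ (Icc a T)) T) (Icc a T) :=
    continuousOn_weightedSegmentIntegral
      ((intervalIntegrable_rpow_neg hα 0 1).mul_continuousOn (by fun_prop)) hφ'
  have hkernel : IntervalIntegrable (fun t => (T - t) ^ (-α)) volume a T := by
    simpa using (intervalIntegrable_rpow_neg hα (T - a) (T - T)).comp_sub_left T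
  have hpow : ContinuousOn (fun t => (T - t) ^ (1 - α)) (Icc a T) :=
    (continuousOn_const.sub continuousOn_id).rpow_const fun _ _ => Or.inr (by linarith)
  refine ((((hpow.mul hJ').intervalIntegrable_of_Icc haT.le).sub
    ((hkernel.const_mul (1 - α)).mul_continuousOn (uIcc_of_le haT.le ▸ hJ))).const_mul
      (1 / Gamma (1 - α))).congr_uIoo fun t ht => ?_
  rw [uIoo_of_le haT.le] at ht
  exact (hasDerivAt_backRLIntegral hα hφ ht).deriv.symm

end BackwardRiemannLiouville

theorem fractional_integration_by_parts_general
    (α T : ℝ) (hα1 : α < 1) (hT : 0 < T)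
    (ρ φ : ℝ → ℝ)
    (hρ : ContDiffOn ℝ 1 ρ (Set.Icc 0 T)) (hφ : ContDiffOn ℝ 1 φ (Set.Icc 0 T)) :
    ∫ t in (0:ℝ)..T, φ t * caputoDeriv α ρ t
      = (∫ t in (0:ℝ)..T, ρ t * backRLDeriv α T φ t)
        - ρ 0 * backRLIntegral α T φ 0 := by
  have hρ' : IntervalIntegrable (deriv ρ) volume 0 T := hρ.intervalIntegrable_deriv hT
  have hswap : ∫ t in (0:ℝ)..T, φ t * caputoDeriv α ρ t
      = ∫ t in (0:ℝ)..T, deriv ρ t * backRLIntegral α T φ t := by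
    simp only [caputoDeriv, backRLIntegral, mul_left_comm (φ _), mul_left_comm (deriv ρ _),
      intervalIntegral.integral_const_mul]
    rw [integral_mul_integral_kernel_comm hT.le (intervalIntegrable_rpow_neg hα1 0 T) hρ'
      hφ.continuousOn]
  have hparts := integral_mul_deriv_eq_deriv_mul_of_hasDerivAt
    (hρ.continuousOn.mono (uIcc_of_le hT.le).subset)
    ((continuousOn_backRLIntegral hα1 hφ.continuousOn).mono (uIcc_of_le hT.le).subset)
    (fun t ht => (hρ.hasDerivAt_derivWithin_Icc
      (by simpa [hT.le] using ht)).differentiableAt.hasDerivAt)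
    (fun t ht => (hasDerivAt_backRLIntegral hα1 hφ
      (by simpa [hT.le] using ht)).differentiableAt.hasDerivAt)
    hρ' (intervalIntegrable_deriv_backRLIntegral hα1 hT hφ)
  have hIT : backRLIntegral α T φ T = 0 := by simp [backRLIntegral]
  simp only [backRLDeriv, mul_neg, intervalIntegral.integral_neg, hswap, hparts, hIT]
  ring

theorem fractional_integration_by_parts
    (α T : ℝ) (hα0 : 0 < α) (hα1 : α < 1) (hT : 0 < T)
    (ρ φ : ℝ → ℝ)
    (hρ : ContDiffOn ℝ 1 ρ (Set.Icc 0 T)) (hφ : ContDiffOn ℝ 1 φ (Set.Icc 0 T)) :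
    ∫ t in (0:ℝ)..T, φ t * caputoDeriv α ρ t
      = (∫ t in (0:ℝ)..T, ρ t * backRLDeriv α T φ t)
        - ρ 0 * backRLIntegral α T φ 0 :=
  fractional_integration_by_parts_general α T hα1 hT ρ φ hρ hφ
end

section
/- Exactness of the backward L1 scheme on step functions: with b_{k,n} := ((t_k − t_{n−1})^{1−α} − (t_{k−1} − t_{n−1})^{1−α})/(Γ(2−α)Δt), if φ is the right-continuous piecewise constant function with φ(s) = φ_k for s ∈ (t_{k−1}, t_k], then −(1/Δt)[ₜₙÎ_T^{1−α}φ − ₜ_{n−1}Î_T^{1−α}φ] = b_{n,n} φ_n + Σ_{k=n+1}^{N_t}(b_{k,n} − b_{k,n+1}) φ_k, where ₜÎ_T^{1−α}φ := (1/Γ(1−α)) ∫ₜ^T (s−t)^{−α} φ(s) ds. -/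
open MeasureTheory intervalIntegral Real

/-- L1 quadrature weights `b_{k,n}` with `t_j = j Δt`. -/
noncomputable def L1weight (α Δt : ℝ) (k n : ℕ) : ℝ :=
  (((k : ℝ) * Δt - ((n : ℝ) - 1) * Δt) ^ (1 - α)
      - (((k : ℝ) - 1) * Δt - ((n : ℝ) - 1) * Δt) ^ (1 - α)) / (Real.Gamma (2 - α) * Δt)

/-! On each grid cell `(t_{k-1}, t_k]` the integrand of `ₜÎ_T^{1−α} φ` is `c_k (s - t)^{-α}`, whose
integral is explicit. Summing over the cells gives `ₜÎ_T^{1−α} φ = Δt ∑_{k > m} b_{k,m+1} c_k` at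
`t = t_m`: the L1 weights are exactly the cell integrals of the kernel. Subtracting the values at
`t_n` and `t_{n-1}` and splitting off the cell `k = n` gives the claim. -/

section ConstantPiece

variable {α a b t c : ℝ} {φ : ℝ → ℝ}

theorem eqOn_uIoc_rpow_sub_mul (hab : a ≤ b) (hφ : ∀ s ∈ Set.Ioc a b, φ s = c) :
    Set.EqOn (fun s => (s - t) ^ (-α) * c) (fun s => (s - t) ^ (-α) * φ s) (Set.uIoc a b) := by
  intro s hs
  rw [Set.uIoc_of_le hab] at hs
  simp only [hφ s hs]

theorem intervalIntegrable_rpow_sub_mul_of_eqOn_Ioc (hα : α < 1) (hab : a ≤ b)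
    (hφ : ∀ s ∈ Set.Ioc a b, φ s = c) :
    IntervalIntegrable (fun s => (s - t) ^ (-α) * φ s) volume a b := by
  have hkernel : IntervalIntegrable (fun s => (s - t) ^ (-α)) volume a b := by
    simpa using
      (intervalIntegrable_rpow' (a := a - t) (b := b - t) (by linarith : -1 < -α)).comp_sub_right t
  exact (hkernel.mul_const c).congr (eqOn_uIoc_rpow_sub_mul hab hφ)

theorem integral_rpow_sub_mul_of_eqOn_Ioc (hα : α < 1) (hab : a ≤ b)
    (hφ : ∀ s ∈ Set.Ioc a b, φ s = c) :
    ∫ s in a..b, (s - t) ^ (-α) * φ s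
      = c * (((b - t) ^ (1 - α) - (a - t) ^ (1 - α)) / (1 - α)) := by
  rw [← integral_congr_ae (Filter.Eventually.of_forall (eqOn_uIoc_rpow_sub_mul (t := t) hab hφ))]
  rw [intervalIntegral.integral_mul_const, integral_comp_sub_right (fun x => x ^ (-α)),
    integral_rpow (Or.inl (by linarith)), neg_add_eq_sub, mul_comm]

end ConstantPiece

theorem integral_eq_sum_integral_grid {f : ℝ → ℝ} {h : ℝ} {m N : ℕ} (hmN : m ≤ N)
    (hf : ∀ k ∈ Finset.Icc (m + 1) N,
      IntervalIntegrable f volume (((k : ℝ) - 1) * h) (k * h)) :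
    ∫ s in m * h..N * h, f s
      = ∑ k ∈ Finset.Icc (m + 1) N, ∫ s in ((k : ℝ) - 1) * h..k * h, f s := by
  have hsum := sum_integral_adjacent_intervals_Ico (a := fun k : ℕ => ((k : ℝ) - 1) * h)
    (μ := volume) (f := f) (m := m + 1) (n := N + 1) (by omega)
  simp only [Finset.Ico_add_one_right_eq_Icc, Nat.cast_add, Nat.cast_one,
    add_sub_cancel_right] at hsum
  exact (hsum fun k hk => hf k (by simp only [Finset.mem_Icc, Set.mem_Ico] at hk ⊢; omega)).symm

section StepFunction

variable {α Δt t : ℝ} {N m : ℕ} {c : ℕ → ℝ} {φ : ℝ → ℝ}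

theorem integral_rpow_sub_mul_stepFunction (hα : α < 1) (hΔt : 0 ≤ Δt)
    (hφ : ∀ k : ℕ, 1 ≤ k → k ≤ N →
      ∀ s ∈ Set.Ioc (((k : ℝ) - 1) * Δt) ((k : ℝ) * Δt), φ s = c k)
    (hmN : m ≤ N) :
    ∫ s in m * Δt..N * Δt, (s - t) ^ (-α) * φ s
      = ∑ k ∈ Finset.Icc (m + 1) N, c k *
          ((((k : ℝ) * Δt - t) ^ (1 - α) - (((k : ℝ) - 1) * Δt - t) ^ (1 - α)) / (1 - α)) := by
  have hcell : ∀ k ∈ Finset.Icc (m + 1) N, ((k : ℝ) - 1) * Δt ≤ k * Δt ∧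
      ∀ s ∈ Set.Ioc (((k : ℝ) - 1) * Δt) ((k : ℝ) * Δt), φ s = c k := by
    intro k hk
    obtain ⟨hmk, hkN⟩ := Finset.mem_Icc.mp hk
    exact ⟨by nlinarith, hφ k (by omega) hkN⟩
  rw [integral_eq_sum_integral_grid hmN fun k hk =>
    intervalIntegrable_rpow_sub_mul_of_eqOn_Ioc hα (hcell k hk).1 (hcell k hk).2]
  exact Finset.sum_congr rfl fun k hk =>
    integral_rpow_sub_mul_of_eqOn_Ioc hα (hcell k hk).1 (hcell k hk).2

theorem backRLIntegral_stepFunction (hα : α < 1) (hΔt : 0 < Δt)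
    (hφ : ∀ k : ℕ, 1 ≤ k → k ≤ N →
      ∀ s ∈ Set.Ioc (((k : ℝ) - 1) * Δt) ((k : ℝ) * Δt), φ s = c k)
    (hmN : m ≤ N) :
    backRLIntegral α (N * Δt) φ (m * Δt)
      = Δt * ∑ k ∈ Finset.Icc (m + 1) N, L1weight α Δt k (m + 1) * c k := by
  have hΓ : Real.Gamma (2 - α) = (1 - α) * Real.Gamma (1 - α) := by
    rw [show 2 - α = (1 - α) + 1 by ring, Real.Gamma_add_one (by linarith)]
  have hΓpos : 0 < Real.Gamma (1 - α) := Real.Gamma_pos_of_pos (by linarith)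
  have h1α : 1 - α ≠ 0 := by linarith
  rw [backRLIntegral, integral_rpow_sub_mul_stepFunction hα hΔt.le hφ hmN, Finset.mul_sum,
    Finset.mul_sum]
  refine Finset.sum_congr rfl fun k _ => ?_
  simp only [L1weight, hΓ, Nat.cast_add, Nat.cast_one, add_sub_cancel_right]
  field_simp

end StepFunction

theorem backward_L1_exact_on_step_functions_general
    (α T : ℝ) (hα1 : α < 1) (hT : 0 < T)
    (Nt : ℕ) (hNt : 1 ≤ Nt) (Δt : ℝ) (hΔt : Δt = T / Nt)
    (c : ℕ → ℝ) (φ : ℝ → ℝ)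
    (hφ : ∀ k : ℕ, 1 ≤ k → k ≤ Nt →
      ∀ s ∈ Set.Ioc (((k : ℝ) - 1) * Δt) ((k : ℝ) * Δt), φ s = c k) :
    ∀ n : ℕ, 1 ≤ n → n ≤ Nt →
      -(1 / Δt) * (backRLIntegral α T φ ((n : ℝ) * Δt)
          - backRLIntegral α T φ (((n : ℝ) - 1) * Δt))
        = L1weight α Δt n n * c n
          + ∑ k ∈ Finset.Icc (n + 1) Nt,
              (L1weight α Δt k n - L1weight α Δt k (n + 1)) * c k := by
  intro n hn hnN
  have hNtpos : (0 : ℝ) < Nt := by exact_mod_cast hNt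
  have hΔtpos : 0 < Δt := by rw [hΔt]; positivity
  have hTN : T = Nt * Δt := by rw [hΔt]; field_simp
  have hcur := backRLIntegral_stepFunction hα1 hΔtpos hφ hnN
  have hprev := backRLIntegral_stepFunction hα1 hΔtpos hφ (Nat.sub_le n 1 |>.trans hnN)
  rw [Nat.cast_sub hn, Nat.cast_one, Nat.sub_add_cancel hn, ← Finset.add_sum_Ioc_eq_sum_Icc hnN,
    ← Finset.Icc_add_one_left_eq_Ioc] at hprev
  rw [hTN, hcur, hprev]
  simp only [sub_mul, Finset.sum_sub_distrib]
  field_simp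
  ring

theorem backward_L1_exact_on_step_functions
    (α T : ℝ) (hα0 : 0 < α) (hα1 : α < 1) (hT : 0 < T)
    (Nt : ℕ) (hNt : 1 ≤ Nt) (Δt : ℝ) (hΔt : Δt = T / Nt)
    (c : ℕ → ℝ) (φ : ℝ → ℝ)
    (hφ : ∀ k : ℕ, 1 ≤ k → k ≤ Nt →
      ∀ s ∈ Set.Ioc (((k : ℝ) - 1) * Δt) ((k : ℝ) * Δt), φ s = c k) :
    ∀ n : ℕ, 1 ≤ n → n ≤ Nt →
      -(1 / Δt) * (backRLIntegral α T φ ((n : ℝ) * Δt)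
          - backRLIntegral α T φ (((n : ℝ) - 1) * Δt))
        = L1weight α Δt n n * c n
          + ∑ k ∈ Finset.Icc (n + 1) Nt,
              (L1weight α Δt k n - L1weight α Δt k (n + 1)) * c k :=
  backward_L1_exact_on_step_functions_general α T hα1 hT Nt hNt Δt hΔt c φ hφ
end
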